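/- arXiv:2007.08899 — 3 statements merged into one kernel-verified Lean document; each statement's English description precedes it below -/
import Mathlib

section
/- Let f: ℝ → ℝ be an even C¹ function such that f(t) → 0 and (1+t²)·f'(t) → 0 as |t| → ∞. Then f lies in the closure, with respect to the C¹-norm ‖g‖_{C¹} = sup|g| + sup|g'|, of the even part of the subalgebra of C₀(ℝ) generated by f_ev(t)=1/(1+t²) and f_od(t)=t/(1+t²). -/
/-!
Put `φ t = (1 + t²) f'(t)`: it is continuous, odd, and tends to `0` at `±∞`. On `t ≥ 0` the
substitution `u = f_ev t ∈ (0, 1]` is inverted by `t = √(1/u - 1)` and turns `f_od t` into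
`√(u (1 - u))`, so Weierstrass on `[0, 1]` applied to `u ↦ φ (√(1/u - 1))`, which vanishes at
both ends, yields a polynomial `p` with `|φ - f_od · p(f_ev)| ≤ δ` on `ℝ` (by oddness for `t < 0`).
If `P' = p` and `P 0 = 0`, then `g = -P(f_ev)/2` is even, lies in the algebra generated by `f_ev`,
and `g' = f_ev f_od p(f_ev)`; hence `|f' - g'| ≤ δ / (1 + t²)`, and integrating from `-∞` gives
`|f - g| ≤ π δ`.
-/

open Filter Real Set Polynomial Topology

noncomputable section

lemma Function.Even.deriv_odd {f : ℝ → ℝ} (heven : Function.Even f) : Function.Odd (deriv f) :=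
  fun t => by
    have h := deriv_comp_neg (f := f) (x := t)
    rw [show (fun x => f (-x)) = f from funext heven] at h
    linarith

namespace Polynomial

section Antideriv

variable {K : Type*} [Field K]

def antideriv (p : K[X]) : K[X] :=
  ∑ i ∈ Finset.range (p.natDegree + 1), C (p.coeff i / (i + 1)) * X ^ (i + 1)

lemma derivative_antideriv [CharZero K] (p : K[X]) : derivative (antideriv p) = p := by
  conv_rhs => rw [p.as_sum_range_C_mul_X_pow]
  simp only [antideriv, derivative_sum, derivative_C_mul_X_pow]
  refine Finset.sum_congr rfl fun i _ => ?_
  push_cast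
  rw [div_mul_cancel₀ _ (Nat.cast_add_one_ne_zero i)]

lemma coeff_antideriv_zero (p : K[X]) : (antideriv p).coeff 0 = 0 := by
  simp [antideriv]

end Antideriv

lemma aeval_mem_of_coeff_zero_eq_zero {R A : Type*} [CommSemiring R] [Semiring A] [Algebra R A]
    (S : NonUnitalSubalgebra R A) {a : A} (ha : a ∈ S) {P : R[X]} (hP : P.coeff 0 = 0) :
    aeval a P ∈ S := by
  have hpow : ∀ n : ℕ, a ^ (n + 1) ∈ S := fun n => by
    induction n with
    | zero => simpa using ha
    | succ n ih => rw [pow_succ]; exact mul_mem ih ha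
  rw [aeval_eq_sum_range]
  refine sum_mem fun i _ => ?_
  rcases i with _ | i
  · simp [hP]
  · exact SMulMemClass.smul_mem _ (hpow i)

end Polynomial

lemma exists_polynomial_near_mul_one_sub {Φ : ℝ → ℝ} (hΦ : ContinuousOn Φ (Icc 0 1))
    (h0 : Φ 0 = 0) (h1 : Φ 1 = 0) {ε : ℝ} (hε : 0 < ε) :
    ∃ q : ℝ[X], ∀ u ∈ Icc (0 : ℝ) 1, |Φ u - u * (1 - u) * q.eval u| ≤ ε := by
  obtain ⟨r, hr⟩ := exists_polynomial_near_of_continuousOn 0 1 Φ hΦ (ε / 2) (half_pos hε)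
  -- subtract the linear interpolation of the endpoint errors, so that `s` vanishes at `0` and `1`
  set s : ℝ[X] := r - C (r.eval 0) * (1 - X) - C (r.eval 1) * X
  obtain ⟨s₁, hs₁⟩ : X ∣ s := by simpa using dvd_iff_isRoot.mpr (show s.IsRoot 0 by simp [s])
  have hs₁_one : s₁.IsRoot 1 := by
    have : s.eval 1 = 0 := by simp [s]
    simpa [hs₁] using this
  obtain ⟨q, hq⟩ := dvd_iff_isRoot.mpr hs₁_one
  refine ⟨-q, fun u hu => ?_⟩
  have hsu : s.eval u = u * (1 - u) * (-q).eval u := by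
    rw [hs₁, hq]
    simp only [map_one, eval_mul, eval_X, eval_sub, eval_one, eval_neg]
    ring
  have hsu' : s.eval u = r.eval u - r.eval 0 * (1 - u) - r.eval 1 * u := by simp [s]
  have e0 := hr 0 ⟨le_rfl, zero_le_one⟩
  have e1 := hr 1 ⟨zero_le_one, le_rfl⟩
  have eu := hr u hu
  rw [h0, abs_lt] at e0
  rw [h1, abs_lt] at e1
  rw [abs_lt] at eu
  rw [← hsu, hsu', abs_le]
  obtain ⟨hu0, hu1⟩ := hu
  constructor <;> nlinarith

lemma exists_polynomial_near_sqrt_mul {Φ : ℝ → ℝ} (hΦ : ContinuousOn Φ (Icc 0 1))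
    (h0 : Φ 0 = 0) (h1 : Φ 1 = 0) {ε : ℝ} (hε : 0 < ε) :
    ∃ p : ℝ[X], ∀ u ∈ Icc (0 : ℝ) 1, |Φ u - √(u * (1 - u)) * p.eval u| ≤ ε := by
  obtain ⟨q, hq⟩ := exists_polynomial_near_mul_one_sub hΦ h0 h1 (half_pos hε)
  obtain ⟨p, hp⟩ := exists_polynomial_near_of_continuousOn 0 1
    (fun u => √(u * (1 - u)) * q.eval u) (by fun_prop) (ε / 2) (half_pos hε)
  refine ⟨p, fun u hu => ?_⟩
  set w := √(u * (1 - u))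
  have hw_sq : w ^ 2 = u * (1 - u) := sq_sqrt (by nlinarith [hu.1, hu.2])
  have hw_le : w ≤ 1 := sqrt_le_one.mpr (by nlinarith [hu.1, hu.2])
  calc |Φ u - w * p.eval u|
      = |(Φ u - u * (1 - u) * q.eval u) + w * (w * q.eval u - p.eval u)| := by
        rw [← hw_sq]; ring_nf
    _ ≤ |Φ u - u * (1 - u) * q.eval u| + w * |w * q.eval u - p.eval u| := by
        exact (abs_add_le _ _).trans_eq (by rw [abs_mul, abs_of_nonneg (sqrt_nonneg _)])
    _ ≤ ε / 2 + 1 * (ε / 2) := by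
        gcongr
        · exact hq u hu
        · rw [abs_sub_comm]; exact (hp u hu).le
    _ = ε := by ring

lemma continuousOn_comp_sqrt_inv_sub_one {φ : ℝ → ℝ} (hφ : Continuous φ) (h0 : φ 0 = 0)
    (htop : Tendsto φ atTop (𝓝 0)) :
    ContinuousOn (fun u => φ √(u⁻¹ - 1)) (Icc 0 1) := by
  intro u hu
  rcases hu.1.eq_or_lt with rfl | hpos
  · -- the junk values `0⁻¹ = 0` and `√(-1) = 0` make the function equal to `φ 0 = 0` at `0`
    refine (continuousWithinAt_Ioi_iff_Ici.mp ?_).mono Icc_subset_Ici_self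
    have hsqrt : Tendsto (fun u : ℝ => √(u⁻¹ - 1)) (𝓝[>] 0) atTop :=
      tendsto_sqrt_atTop.comp (tendsto_atTop_add_const_right _ (-1) tendsto_inv_nhdsGT_zero)
    have hφ0 : φ √((0 : ℝ)⁻¹ - 1) = 0 := by rw [sqrt_eq_zero_of_nonpos (by norm_num), h0]
    rw [ContinuousWithinAt, hφ0]
    exact htop.comp hsqrt
  · exact (hφ.continuousAt.comp (continuous_sqrt.continuousAt.comp
      ((continuousAt_inv₀ hpos.ne').sub continuousAt_const))).continuousWithinAt

lemma abs_le_pi_mul_of_abs_deriv_le {h : ℝ → ℝ} {C : ℝ} (hd : Differentiable ℝ h)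
    (hbot : Tendsto h atBot (𝓝 0)) (hC : ∀ s, |deriv h s| ≤ C / (1 + s ^ 2)) (t : ℝ) :
    |h t| ≤ π * C := by
  have hC0 : 0 ≤ C := by simpa using (abs_nonneg _).trans (hC 0)
  have hmono : ∀ σ : ℝ, |σ| = 1 → Monotone fun s => C * arctan s - σ * h s := fun σ hσ =>
    monotone_of_hasDerivAt_nonneg
      (fun s => ((hasDerivAt_arctan s).const_mul C).sub ((hd s).hasDerivAt.const_mul σ))
      fun s => by
        have h1 : σ * deriv h s ≤ |σ * deriv h s| := le_abs_self _
        rw [abs_mul, hσ, one_mul] at h1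
        simp only [Pi.zero_apply, mul_one_div]; linarith [hC s]
  have hsub : ∀ x ≤ t, |h t - h x| ≤ C * (arctan t - arctan x) := fun x hx => by
    have h1 := hmono 1 (by simp) hx
    have h2 := hmono (-1) (by simp) hx
    simp only at h1 h2
    rw [abs_le]; constructor <;> linarith
  have hlim : Tendsto (fun x => C * (arctan t - arctan x)) atBot (𝓝 (C * (arctan t + π / 2))) := by
    have := (tendsto_arctan_atBot.mono_right nhdsWithin_le_nhds).const_sub (arctan t)
    simpa [sub_neg_eq_add] using this.const_mul C
  have hbound : |h t| ≤ C * (arctan t + π / 2) :=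
    le_of_tendsto_of_tendsto (by simpa using (hbot.const_sub (h t)).abs) hlim
      (eventually_le_atBot t |>.mono hsub)
  nlinarith [arctan_lt_pi_div_two t]

lemma iSup_abs_sub_add_iSup_abs_deriv_sub_le {f g : ℝ → ℝ} {C : ℝ} (hf : Differentiable ℝ f)
    (hg : Differentiable ℝ g) (hbot : Tendsto (fun t => f t - g t) atBot (𝓝 0))
    (hC : ∀ s, |deriv f s - deriv g s| ≤ C / (1 + s ^ 2)) :
    (⨆ t, |f t - g t|) + (⨆ t, |deriv f t - deriv g t|) ≤ (π + 1) * C := by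
  have hC' : ∀ s, |deriv (fun t => f t - g t) s| ≤ C / (1 + s ^ 2) := fun s => by
    rw [deriv_fun_sub (hf s) (hg s)]; exact hC s
  have hC0 : 0 ≤ C := by simpa using (abs_nonneg _).trans (hC 0)
  rw [add_mul, one_mul]
  exact add_le_add (ciSup_le (abs_le_pi_mul_of_abs_deriv_le (hf.sub hg) hbot hC'))
    (ciSup_le fun s => (hC s).trans (div_le_self hC0 (by nlinarith [sq_nonneg s])))

def fEv (t : ℝ) : ℝ := 1 / (1 + t ^ 2)

def fOd (t : ℝ) : ℝ := t / (1 + t ^ 2)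

lemma fEv_neg (t : ℝ) : fEv (-t) = fEv t := by simp [fEv]

lemma fOd_neg (t : ℝ) : fOd (-t) = -fOd t := by simp [fOd, neg_div]

lemma fEv_mem_Icc (t : ℝ) : fEv t ∈ Icc (0 : ℝ) 1 :=
  ⟨by unfold fEv; positivity, by unfold fEv; rw [div_le_one (by positivity)]; nlinarith [sq_nonneg t]⟩

lemma sqrt_inv_fEv_sub_one {t : ℝ} (ht : 0 ≤ t) : √((fEv t)⁻¹ - 1) = t := by
  simp [fEv, sqrt_sq ht]

lemma sqrt_fEv_mul_one_sub_fEv {t : ℝ} (ht : 0 ≤ t) : √(fEv t * (1 - fEv t)) = fOd t := by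
  have h : fEv t * (1 - fEv t) = fOd t ^ 2 := by
    unfold fEv fOd; field_simp; ring
  rw [h, sqrt_sq (by unfold fOd; positivity)]

lemma hasDerivAt_fEv (t : ℝ) : HasDerivAt fEv (-2 * fEv t * fOd t) t := by
  have h := (hasDerivAt_const t (1 : ℝ)).fun_div ((hasDerivAt_pow 2 t).const_add 1)
    (by positivity : (1 + t ^ 2) ≠ 0)
  exact h.congr_deriv (by simp [fEv, fOd]; field_simp)

lemma tendsto_fEv_atBot : Tendsto fEv atBot (𝓝 0) := by
  have h : Tendsto (fun t : ℝ => 1 + t ^ 2) atBot atTop :=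
    tendsto_atTop_add_const_left _ 1 <|
      (tendsto_pow_atTop two_ne_zero).comp tendsto_neg_atBot_atTop |>.congr fun t => by simp
  exact h.inv_tendsto_atTop.congr fun t => (one_div _).symm

lemma exists_polynomial_near_fOd_mul {φ : ℝ → ℝ} (hφ : Continuous φ)
    (hodd : Function.Odd φ) (htop : Tendsto φ atTop (𝓝 0)) {δ : ℝ} (hδ : 0 < δ) :
    ∃ p : ℝ[X], ∀ t, |φ t - fOd t * p.eval (fEv t)| ≤ δ := by
  have h0 : φ 0 = 0 := by linarith [hodd 0, show φ (-0) = φ 0 by simp]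
  obtain ⟨p, hp⟩ := exists_polynomial_near_sqrt_mul
    (continuousOn_comp_sqrt_inv_sub_one hφ h0 htop)
    (by rw [sqrt_eq_zero_of_nonpos (by norm_num), h0]) (by simp [h0]) hδ
  have hnonneg : ∀ t, 0 ≤ t → |φ t - fOd t * p.eval (fEv t)| ≤ δ := fun t ht => by
    simpa [sqrt_inv_fEv_sub_one ht, sqrt_fEv_mul_one_sub_fEv ht] using hp (fEv t) (fEv_mem_Icc t)
  refine ⟨p, fun t => (le_total 0 t).elim (hnonneg t) fun ht => ?_⟩
  have h := hnonneg (-t) (neg_nonneg.mpr ht)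
  rwa [hodd, fOd_neg, fEv_neg, neg_mul, sub_neg_eq_add, neg_add_eq_sub, abs_sub_comm] at h

lemma exists_mem_adjoin_fEv_hasDerivAt (p : ℝ[X]) :
    ∃ g ∈ NonUnitalAlgebra.adjoin ℝ ({fEv, fOd} : Set (ℝ → ℝ)), (∀ t, g (-t) = g t) ∧
      Tendsto g atBot (𝓝 0) ∧ ∀ t, HasDerivAt g (fEv t * fOd t * p.eval (fEv t)) t := by
  set P := antideriv p
  refine ⟨fun t => -P.eval (fEv t) / 2, ?_, fun t => by simp only [fEv_neg], ?_, fun t => ?_⟩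
  · have h : (fun t => -P.eval (fEv t) / 2) = (-(1 / 2) : ℝ) • aeval fEv P := by
      funext t
      simp only [Pi.smul_apply, aeval_fn_apply, coe_aeval_eq_eval, smul_eq_mul]
      ring
    rw [h]
    exact SMulMemClass.smul_mem _ (aeval_mem_of_coeff_zero_eq_zero _
      (NonUnitalAlgebra.subset_adjoin ℝ (Set.mem_insert _ _)) (coeff_antideriv_zero p))
  · simpa [← coeff_zero_eq_eval_zero, P, coeff_antideriv_zero] using
      ((P.continuous.tendsto 0).comp tendsto_fEv_atBot).neg.div_const 2
  · have h := (P.hasDerivAt (fEv t)).comp t (hasDerivAt_fEv t)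
    rw [derivative_antideriv] at h
    exact (h.neg.div_const 2).congr_deriv (by ring)

theorem stmt2 (f : ℝ → ℝ)
    (hf : ContDiff ℝ 1 f)
    (heven : ∀ t, f (-t) = f t)
    (hf0 : Tendsto f (cocompact ℝ) (nhds 0))
    (hf'0 : Tendsto (fun t => (1 + t ^ 2) * deriv f t) (cocompact ℝ) (nhds 0)) :
    ∀ ε > (0 : ℝ), ∃ g ∈ NonUnitalAlgebra.adjoin ℝ
        ({fun t => 1 / (1 + t ^ 2), fun t => t / (1 + t ^ 2)} : Set (ℝ → ℝ)),
      (∀ t, g (-t) = g t) ∧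
      (⨆ t : ℝ, |f t - g t|) + (⨆ t : ℝ, |deriv f t - deriv g t|) < ε := by
  intro ε hε
  set δ := ε / (π + 2) with hδ
  obtain ⟨p, hp⟩ := exists_polynomial_near_fOd_mul (φ := fun t => (1 + t ^ 2) * deriv f t)
    (by have := hf.continuous_deriv le_rfl; fun_prop)
    (fun t => by simp only [Function.Even.deriv_odd heven t, neg_sq, mul_neg])
    (hf'0.mono_left atTop_le_cocompact) (show 0 < δ by positivity)
  obtain ⟨g, hg_mem, hg_even, hg_bot, hg⟩ := exists_mem_adjoin_fEv_hasDerivAt p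
  have hderiv (t : ℝ) : |deriv f t - deriv g t| ≤ δ / (1 + t ^ 2) := by
    have h : deriv f t - fEv t * fOd t * p.eval (fEv t)
        = ((1 + t ^ 2) * deriv f t - fOd t * p.eval (fEv t)) / (1 + t ^ 2) := by
      unfold fEv fOd; field_simp
    rw [(hg t).deriv, h, abs_div, abs_of_pos (by positivity : (0 : ℝ) < 1 + t ^ 2)]
    exact div_le_div_of_nonneg_right (hp t) (by positivity)
  refine ⟨g, hg_mem, hg_even, (iSup_abs_sub_add_iSup_abs_deriv_sub_le
    (hf.differentiable one_ne_zero) (fun t => (hg t).differentiableAt)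
    (by simpa using (hf0.mono_left atBot_le_cocompact).sub hg_bot) hderiv).trans_lt ?_⟩
  rw [hδ, mul_div_assoc', div_lt_iff₀ (by positivity)]
  nlinarith [pi_pos]

end
end

section
/- Let f: ℝ → ℂ be an odd C² function. Define g: ℝ → ℂ by g(t) = (1+t²)·f(t)/t for t ≠ 0 and g(0) = f'(0). Then g is a C¹ function on ℝ (and g is even). Moreover, if f vanishes outside (−ε, ε) for some ε > 0, then so does g. -/
/-!
Off `a`, the derivative of `dslope f a` is `((t - a) • f' t - (f t - f a)) / (t - a) ^ 2`.
The numerator minus `(t - a) ^ 2 / 2 • f'' a` vanishes at `a` and has derivative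
`(t - a) • (f'' t - f'' a) = o(t - a)`, so it is `o((t - a) ^ 2)`: the derivative extends
continuously to `a` with value `f'' a / 2`, and `dslope f a` is `C¹`. For odd `f` we have
`f 0 = 0`, so `g t = (1 + t ^ 2) * dslope f 0 t`.
-/

open Filter Topology Asymptotics Set

section Dslope

variable {E : Type*} [NormedAddCommGroup E] [NormedSpace ℝ E] {f : ℝ → E} {a t : ℝ}

theorem hasDerivAt_dslope_of_ne (hf : DifferentiableAt ℝ f t) (ht : t ≠ a) :
    HasDerivAt (dslope f a) (((t - a) ^ 2)⁻¹ • ((t - a) • deriv f t - (f t - f a))) t := by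
  have hta : t - a ≠ 0 := sub_ne_zero.mpr ht
  have hslope : HasDerivAt (fun x => (x - a)⁻¹ • (f x - f a))
      (-((t - a) ^ 2)⁻¹ • (f t - f a) + (t - a)⁻¹ • deriv f t) t :=
    (((hasDerivAt_id t).sub_const a).inv hta).smul (hf.hasDerivAt.sub_const (f a)) |>.congr_deriv
      (by simp [add_comm, div_eq_mul_inv])
  refine (hslope.congr_of_eventuallyEq (dslope_eventuallyEq_slope_of_ne f ht)).congr_deriv ?_
  have hinv : ((t - a) ^ 2)⁻¹ * (t - a) = (t - a)⁻¹ := by field_simp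
  rw [smul_sub ((t - a) ^ 2)⁻¹, smul_smul, hinv]
  module

theorem tendsto_deriv_formula_dslope (hf : ContDiff ℝ 2 f) (a : ℝ) :
    Tendsto (fun t => ((t - a) ^ 2)⁻¹ • ((t - a) • deriv f t - (f t - f a))) (𝓝[≠] a)
      (𝓝 ((2 : ℝ)⁻¹ • deriv (deriv f) a)) := by
  set L := deriv (deriv f) a
  have hf' : ContDiff ℝ 1 (deriv f) := hf.deriv' (n := 1)
  let φ : ℝ → E := fun t => (t - a) • deriv f t - (f t - f a) - (2⁻¹ * (t - a) ^ 2) • L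
  have hφ : ∀ t, HasDerivAt φ ((t - a) • (deriv (deriv f) t - L)) t := by
    intro t
    have h1 := ((hasDerivAt_id t).sub_const a).smul (hf'.differentiable one_ne_zero t).hasDerivAt
    have h2 := (hf.differentiable two_ne_zero t).hasDerivAt.sub_const (f a)
    have h3 := (((hasDerivAt_id t).sub_const a).pow 2).const_mul (2⁻¹ : ℝ) |>.smul_const L
    refine ((h1.sub h2).sub h3).congr_deriv ?_
    simp only [id, one_smul]
    norm_num
    module
  have hφ' : (fun t => (t - a) • (deriv (deriv f) t - L)) =o[𝓝 a] fun t => (t - a) ^ 1 := by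
    have hc : (fun t => deriv (deriv f) t - L) =o[𝓝 a] fun _ => (1 : ℝ) :=
      isLittleO_one_iff ℝ |>.mpr <| tendsto_sub_nhds_zero_iff.mpr <|
        (hf'.continuous_deriv le_rfl).continuousAt
    simpa using (isBigO_refl (fun t => t - a) (𝓝 a)).smul_isLittleO hc
  have hφo : φ =o[𝓝 a] fun t => (t - a) ^ 2 := by
    simpa [φ, nhdsWithin_univ] using
      convex_univ.isLittleO_pow_succ_real (mem_univ a) (fun t _ => (hφ t).hasDerivWithinAt)
        (by rwa [nhdsWithin_univ])
  have hlim : Tendsto (fun t => ((t - a) ^ 2)⁻¹ • φ t + (2 : ℝ)⁻¹ • L) (𝓝[≠] a)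
      (𝓝 (0 + (2 : ℝ)⁻¹ • L)) :=
    (hφo.mono nhdsWithin_le_nhds).tendsto_inv_smul_nhds_zero.add_const _
  rw [zero_add] at hlim
  refine hlim.congr' (eventually_nhdsWithin_of_forall fun t (ht : t ≠ a) => ?_)
  have hta : (t - a) ^ 2 ≠ 0 := pow_ne_zero 2 (sub_ne_zero.mpr ht)
  simp only [φ, smul_sub, smul_smul, mul_left_comm _ (2 : ℝ)⁻¹, inv_mul_cancel₀ hta, mul_one]
  abel

theorem ContDiff.contDiff_one_dslope (hf : ContDiff ℝ 2 f) (a : ℝ) :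
    ContDiff ℝ 1 (dslope f a) := by
  classical
  set D : ℝ → E := fun t => ((t - a) ^ 2)⁻¹ • ((t - a) • deriv f t - (f t - f a))
  set g := Function.update D a ((2 : ℝ)⁻¹ • deriv (deriv f) a)
  have hfd : Differentiable ℝ f := hf.differentiable two_ne_zero
  have hga : ContinuousAt g a :=
    continuousAt_update_same.mpr (tendsto_deriv_formula_dslope hf a)
  have hg : ∀ t, HasDerivAt (dslope f a) (g t) t :=
    hasDerivAt_of_hasDerivAt_of_ne'
      (fun t ht => by simpa [g, ht] using hasDerivAt_dslope_of_ne (hfd t) ht)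
      (continuousAt_dslope_same.mpr (hfd a)) hga
  have hgc : Continuous g := continuous_iff_continuousAt.mpr fun t => by
    rcases eq_or_ne t a with rfl | ht
    · exact hga
    · have hfc : Continuous f := hfd.continuous
      have hf' : Continuous (deriv f) := hf.continuous_deriv one_le_two
      have hta : (t - a) ^ 2 ≠ 0 := pow_ne_zero 2 (sub_ne_zero.mpr ht)
      rw [continuousAt_update_of_ne ht]
      simp only [D]
      fun_prop (disch := exact hta)
  rw [contDiff_one_iff_deriv]
  exact ⟨fun t => (hg t).differentiableAt, by rwa [funext fun t => (hg t).deriv]⟩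

end Dslope

theorem stmt3 (f : ℝ → ℂ) (hf : ContDiff ℝ 2 f)
    (hodd : ∀ t : ℝ, f (-t) = -f t)
    (g : ℝ → ℂ)
    (hg : ∀ t : ℝ, g t = if t = 0 then deriv f 0
      else ((1 + t ^ 2 : ℝ) : ℂ) * f t / (t : ℂ)) :
    ContDiff ℝ 1 g ∧ (∀ t : ℝ, g (-t) = g t) ∧
      ∀ ε > (0 : ℝ), (∀ t : ℝ, ε ≤ |t| → f t = 0) → ∀ t : ℝ, ε ≤ |t| → g t = 0 := by
  have hf0 : f 0 = 0 := self_eq_neg.mp (by simpa using hodd 0)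
  have hg_dslope : g = fun t => ((1 + t ^ 2 : ℝ) : ℂ) * dslope f 0 t := by
    funext t
    rcases eq_or_ne t 0 with rfl | ht
    · simp [hg, dslope_same]
    · simp [hg, ht, dslope_of_ne, slope, hf0, Complex.real_smul, div_eq_inv_mul, mul_left_comm]
  refine ⟨?_, fun t => ?_, fun ε _ hsupp t ht => ?_⟩
  · rw [hg_dslope]
    exact (Complex.ofRealCLM.contDiff.comp (contDiff_const.add (contDiff_id.pow 2))).mul
      (hf.contDiff_one_dslope 0)
  · rcases eq_or_ne t 0 with rfl | ht
    · simp
    · simp [hg, ht, hodd, neg_div_neg_eq]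
  · have ht0 : t ≠ 0 := by rintro rfl; simp at ht; linarith
    simp [hg, ht0, hsupp t ht]
end

section
/- Let f: ℝ → ℂ be a C¹ function. Then there exist continuous functions f₀, f₁: [0,∞) → ℂ such that f(t) = f₀(t²) + t·f₁(t²) for all t ∈ ℝ. Moreover, if f vanishes outside (−ε, ε) for some ε > 0, then f₀ and f₁ vanish on [ε², ∞). -/
/-!
Put `f₀(s) = (f(√s) + f(-√s))/2` and `f₁(s) = ½ ∫₋₁¹ f'(√s v) dv`. By the fundamental theorem of
calculus `t ∫₋₁¹ f'(t v) dv = f(t) - f(-t)` for every real `t`, so `f₁(t²)` is the difference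
quotient `(f(t) - f(-t))/(2t)` away from `0`, while the integral form makes `f₁` continuous up
to `s = 0` as soon as `f'` is continuous. Both formulas only see `f` at `±√s`, hence vanish once
`√s` leaves the support of `f`.
-/

open Real

namespace ParityDecomposition

variable {E : Type*} [NormedAddCommGroup E] [NormedSpace ℝ E]

noncomputable def evenPart (f : ℝ → E) (s : ℝ) : E :=
  (1 / 2 : ℝ) • (f √s + f (-√s))

noncomputable def oddPart (f : ℝ → E) (s : ℝ) : E :=
  (1 / 2 : ℝ) • ∫ v in (-1 : ℝ)..1, deriv f (√s * v)

theorem continuous_evenPart {f : ℝ → E} (hf : Continuous f) : Continuous (evenPart f) :=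
  continuous_const.smul <|
    (hf.comp continuous_sqrt).add (hf.comp continuous_sqrt.neg)

theorem continuous_oddPart {f : ℝ → E} (hf' : Continuous (deriv f)) :
    Continuous (oddPart f) :=
  continuous_const.smul <|
    intervalIntegral.continuous_parametric_intervalIntegral_of_continuous'
      (f := fun s v => deriv f (√s * v)) (hf'.comp ((continuous_sqrt.comp continuous_fst).mul continuous_snd)) _ _

variable [CompleteSpace E]

theorem smul_integral_deriv_comp_mul {f : ℝ → E} (hf : Differentiable ℝ f)
    (hf' : Continuous (deriv f)) (t : ℝ) :
    t • ∫ v in (-1 : ℝ)..1, deriv f (t * v) = f t - f (-t) := by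
  rcases eq_or_ne t 0 with rfl | ht
  · simp
  rw [intervalIntegral.integral_comp_mul_left _ ht, smul_inv_smul₀ ht, mul_neg, mul_one,
    intervalIntegral.integral_deriv_eq_sub (fun x _ => hf x) (hf'.intervalIntegrable _ _)]

theorem evenPart_sq_add_smul_oddPart_sq {f : ℝ → E} (hf : Differentiable ℝ f)
    (hf' : Continuous (deriv f)) (t : ℝ) :
    evenPart f (t ^ 2) + t • oddPart f (t ^ 2) = f t := by
  have hodd := smul_integral_deriv_comp_mul hf hf' |t|
  simp only [evenPart, oddPart, sqrt_sq_eq_abs, smul_comm t (1 / 2 : ℝ)]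
  rcases abs_cases t with ⟨habs, -⟩ | ⟨habs, -⟩
  · rw [habs] at hodd ⊢
    rw [hodd]
    module
  · rw [habs, neg_neg] at hodd ⊢
    rw [neg_smul, neg_eq_iff_eq_neg, neg_sub] at hodd
    rw [hodd]
    module

theorem evenPart_eq_zero_and_oddPart_eq_zero {f : ℝ → E} (hf : Differentiable ℝ f)
    (hf' : Continuous (deriv f)) {ε : ℝ} (hε : 0 < ε) (hsupp : ∀ t, ε ≤ |t| → f t = 0) {s : ℝ}
    (hs : ε ^ 2 ≤ s) : evenPart f s = 0 ∧ oddPart f s = 0 := by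
  have hεs : ε ≤ √s := le_sqrt_of_sq_le hs
  have hpos : f √s = 0 := hsupp _ (by rwa [abs_of_pos (hε.trans_le hεs)])
  have hneg : f (-√s) = 0 := hsupp _ (by rwa [abs_neg, abs_of_pos (hε.trans_le hεs)])
  have hodd := smul_integral_deriv_comp_mul hf hf' √s
  rw [hpos, hneg, sub_zero, smul_eq_zero] at hodd
  refine ⟨by simp [evenPart, hpos, hneg], ?_⟩
  simp [oddPart, hodd.resolve_left (hε.trans_le hεs).ne']

end ParityDecomposition

open ParityDecomposition in
theorem stmt19 (f : ℝ → ℂ) (hf : ContDiff ℝ 1 f) :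
    ∃ f₀ f₁ : ℝ → ℂ,
      ContinuousOn f₀ (Set.Ici 0) ∧ ContinuousOn f₁ (Set.Ici 0) ∧
      (∀ t : ℝ, f t = f₀ (t ^ 2) + (t : ℂ) * f₁ (t ^ 2)) ∧
      ∀ ε > (0 : ℝ), (∀ t : ℝ, ε ≤ |t| → f t = 0) →
        ∀ s : ℝ, ε ^ 2 ≤ s → f₀ s = 0 ∧ f₁ s = 0 := by
  have hd : Differentiable ℝ f := hf.differentiable one_ne_zero
  have hd' : Continuous (deriv f) := hf.continuous_deriv le_rfl
  refine ⟨evenPart f, oddPart f, (continuous_evenPart hf.continuous).continuousOn,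
    (continuous_oddPart hd').continuousOn, fun t => ?_,
    fun ε hε hsupp s hs => evenPart_eq_zero_and_oddPart_eq_zero hd hd' hε hsupp hs⟩
  rw [← Complex.real_smul]
  exact (evenPart_sq_add_smul_oddPart_sq hd hd' t).symm
end
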